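/- For every tuple A ∈ B_n one has the inclusions σ_re(D_n) ⊆ σ_re(T_n^d(A)) ⊆ ⋃_{k=1}^n σ_re(D_k). -/

import Mathlib

open Cardinal

noncomputable section

namespace OperatorMatrix

variable {Y : Type*} [SeminormedAddCommGroup Y] [NormedSpace ℂ Y]

/-- `α(T)`: the nullity of `T`, i.e. the dimension of its kernel. -/
def nullity (T : Y →L[ℂ] Y) : Cardinal := Module.rank ℂ (LinearMap.ker (T : Y →ₗ[ℂ] Y))

/-- `β(T)`: the deficiency of `T`, i.e. the dimension of `Y / R(T)`. -/
def deficiency (T : Y →L[ℂ] Y) : Cardinal := Module.rank ℂ (Y ⧸ LinearMap.range (T : Y →ₗ[ℂ] Y))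

/-- `T` is left Fredholm: `α(T) < ∞` and `R(T)` is closed. -/
def LeftFredholm (T : Y →L[ℂ] Y) : Prop :=
  nullity T < ℵ₀ ∧ IsClosed (LinearMap.range (T : Y →ₗ[ℂ] Y) : Set Y)

/-- `T` is right Fredholm: `β(T) < ∞`. -/
def RightFredholm (T : Y →L[ℂ] Y) : Prop := deficiency T < ℵ₀

/-- `T` is Fredholm: both left and right Fredholm. -/
def Fredholm (T : Y →L[ℂ] Y) : Prop := LeftFredholm T ∧ RightFredholm T

/-- `T` is left Weyl: left Fredholm with `ind T = α(T) - β(T) ≤ 0`. -/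
def LeftWeyl (T : Y →L[ℂ] Y) : Prop := LeftFredholm T ∧ nullity T ≤ deficiency T

/-- `T` is right Weyl: right Fredholm with `ind T = α(T) - β(T) ≥ 0`. -/
def RightWeyl (T : Y →L[ℂ] Y) : Prop := RightFredholm T ∧ deficiency T ≤ nullity T

/-- The left essential spectrum. -/
def sigmaLe (T : Y →L[ℂ] Y) : Set ℂ := {lam | ¬ LeftFredholm (T - lam • 1)}

/-- The right essential spectrum. -/
def sigmaRe (T : Y →L[ℂ] Y) : Set ℂ := {lam | ¬ RightFredholm (T - lam • 1)}

/-- The essential spectrum. -/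
def sigmaE (T : Y →L[ℂ] Y) : Set ℂ := {lam | ¬ Fredholm (T - lam • 1)}

/-- The left Weyl spectrum. -/
def sigmaLw (T : Y →L[ℂ] Y) : Set ℂ := {lam | ¬ LeftWeyl (T - lam • 1)}

/-- The right Weyl spectrum. -/
def sigmaRw (T : Y →L[ℂ] Y) : Set ℂ := {lam | ¬ RightWeyl (T - lam • 1)}

/-- The complements condition: `N(T)` is complemented (by a closed subspace), and `R(T)` is
closed and complemented (by a closed subspace). -/
def ComplementsCondition (T : Y →L[ℂ] Y) : Prop :=
  (∃ q : Submodule ℂ Y, IsClosed (q : Set Y) ∧ IsCompl (LinearMap.ker (T : Y →ₗ[ℂ] Y)) q) ∧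
    IsClosed (LinearMap.range (T : Y →ₗ[ℂ] Y) : Set Y) ∧
    ∃ q : Submodule ℂ Y, IsClosed (q : Set Y) ∧ IsCompl (LinearMap.range (T : Y →ₗ[ℂ] Y)) q

/-- `T` is (relatively) regular: `T S T = T` for some bounded `S`. -/
def IsRegularOp (T : Y →L[ℂ] Y) : Prop := ∃ S : Y →L[ℂ] Y, T.comp (S.comp T) = T

/-- `X ⪯ Z`: `X` embeds in `Z`, i.e. there is a left invertible operator `J : X → Z`. -/
def Embeds (X Z : Type*) [SeminormedAddCommGroup X] [SeminormedAddCommGroup Z]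
    [NormedSpace ℂ X] [NormedSpace ℂ Z] : Prop :=
  ∃ (J : X →L[ℂ] Z) (L : Z →L[ℂ] X), L.comp J = ContinuousLinearMap.id ℂ X

/-- `X ⪯ₛ Z`: `X` strongly embeds in `Z`: `X ⪯ Z` and there is `J : X → Z` with
`dim (Z / R(J)) < ∞`. -/
def StrongEmbeds (X Z : Type*) [SeminormedAddCommGroup X] [SeminormedAddCommGroup Z]
    [NormedSpace ℂ X] [NormedSpace ℂ Z] : Prop :=
  Embeds X Z ∧ ∃ J : X →L[ℂ] Z, Module.rank ℂ (Z ⧸ LinearMap.range (J : X →ₗ[ℂ] Z)) < ℵ₀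

/-- `X ≺ Z`: `X` essentially embeds in `Z`: `X ⪯ Z` and `Z / R(T)` is infinite dimensional
for every `T : X → Z`. -/
def EssEmbeds (X Z : Type*) [SeminormedAddCommGroup X] [SeminormedAddCommGroup Z]
    [NormedSpace ℂ X] [NormedSpace ℂ Z] : Prop :=
  Embeds X Z ∧ ∀ T : X →L[ℂ] Z, ℵ₀ ≤ Module.rank ℂ (Z ⧸ LinearMap.range (T : X →ₗ[ℂ] Z))

/-- `X ≅ Z (u.f.d.s.)`: `X` and `Z` are isomorphic up to a finite dimensional subspace. -/
def UFDS (X Z : Type*) [SeminormedAddCommGroup X] [SeminormedAddCommGroup Z]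
    [NormedSpace ℂ X] [NormedSpace ℂ Z] : Prop :=
  ∃ (X₁ F₁ : Submodule ℂ X) (Z₁ F₂ : Submodule ℂ Z),
    IsCompl X₁ F₁ ∧ IsCompl Z₁ F₂ ∧ IsClosed (X₁ : Set X) ∧ IsClosed (F₁ : Set X) ∧
      IsClosed (Z₁ : Set Z) ∧ IsClosed (F₂ : Set Z) ∧
      FiniteDimensional ℂ F₁ ∧ FiniteDimensional ℂ F₂ ∧ Nonempty (X₁ ≃L[ℂ] Z₁)

/-- The upper triangular operator matrix `T_n^d(A)` with diagonal `D` and strictly upper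
triangular entries `A i j` (for `i < j`), acting on `X 0 ⊕ ⋯ ⊕ X (n-1)`. -/
def triUpper {n : ℕ} {X : Fin n → Type*} [∀ i, NormedAddCommGroup (X i)]
    [∀ i, NormedSpace ℂ (X i)] (D : ∀ i, X i →L[ℂ] X i)
    (A : ∀ i j, X j →L[ℂ] X i) : (∀ i, X i) →L[ℂ] (∀ i, X i) :=
  ContinuousLinearMap.pi fun i =>
    (D i).comp (ContinuousLinearMap.proj i) +
      ∑ j ∈ Finset.univ.filter (fun j => i < j), (A i j).comp (ContinuousLinearMap.proj j)

/-!
Over `ℂ`, `T` is right Fredholm exactly when `R(T)` has finite codimension. The last row of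
`T_n^d(A)` is `(0, …, 0, D_n)`, so the projection onto `X_n` induces a surjection of
`X ⧸ R(T_n^d(A))` onto `X_n ⧸ R(D_n)`. Conversely, if each `R(D_k)` has a finite-dimensional
complement `F_k`, then `R(T_n^d(A)) + ⊕ F_k` is everything: `T_n^d(A)` applied to `x` placed in
slot `k` differs from `D_k x` placed in slot `k` only in the slots before `k`, so the slots are
reached one at a time by induction on `k`.
-/

theorem _root_.Submodule.CoFG.of_map_le {R M N : Type*} [Ring R] [AddCommGroup M] [Module R M]
    [AddCommGroup N] [Module R N] {g : M →ₗ[R] N} (hg : Function.Surjective g) {S : Submodule R M}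
    {T : Submodule R N} (h : S.map g ≤ T) (hS : S.CoFG) : T.CoFG := by
  refine Module.Finite.of_surjective (S.mapQ T g (Submodule.map_le_iff_le_comap.1 h)) fun y => ?_
  obtain ⟨y, rfl⟩ := T.mkQ_surjective y
  obtain ⟨x, rfl⟩ := hg y
  exact ⟨S.mkQ x, rfl⟩

theorem notMem_sigmaRe_iff {T : Y →L[ℂ] Y} {lam : ℂ} :
    lam ∉ sigmaRe T ↔ (LinearMap.range ((T - lam • 1 : Y →L[ℂ] Y) : Y →ₗ[ℂ] Y)).CoFG :=
  not_not.trans Module.rank_lt_aleph0_iff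

section TriUpper

variable {n : ℕ} {X : Fin n → Type*} [∀ i, NormedAddCommGroup (X i)] [∀ i, NormedSpace ℂ (X i)]
  (D : ∀ i, X i →L[ℂ] X i) (A : ∀ i j, X j →L[ℂ] X i)

theorem triUpper_apply (x : ∀ i, X i) (i : Fin n) :
    triUpper D A x i = D i (x i) + ∑ j ∈ Finset.univ.filter (fun j => i < j), A i j (x j) := by
  simp [triUpper]

theorem triUpper_sub_smul (lam : ℂ) :
    triUpper D A - lam • 1 = triUpper (fun i => D i - lam • 1) A := by
  ext x i
  simp only [sub_apply, smul_apply, one_apply_eq_self, Pi.sub_apply, Pi.smul_apply,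
    triUpper_apply]
  abel

theorem triUpper_apply_of_forall_le {k : Fin n} (hk : ∀ j, j ≤ k) (x : ∀ i, X i) :
    triUpper D A x k = D k (x k) := by
  rw [triUpper_apply, Finset.sum_eq_zero, add_zero]
  intro j hj
  exact absurd (Finset.mem_filter.1 hj).2 (hk j).not_gt

theorem triUpper_single (k : Fin n) (y : X k) :
    triUpper D A (Pi.single k y) =
      Pi.single k (D k y) + ∑ i ∈ Finset.univ.filter (· < k), Pi.single i (A i k y) := by
  ext i
  simp only [triUpper_apply, Pi.add_apply, Finset.sum_apply, Finset.sum_pi_single,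
    Pi.apply_single (fun i => D i) (fun i => map_zero _),
    Pi.apply_single (fun j => A i j) (fun j => map_zero _), Finset.sum_pi_single']
  simp

theorem range_triUpper_sup_eq_top {F : ∀ i, Submodule ℂ (X i)}
    (hF : ∀ i, LinearMap.range (D i : X i →ₗ[ℂ] X i) ⊔ F i = ⊤) :
    LinearMap.range (triUpper D A : (∀ i, X i) →ₗ[ℂ] (∀ i, X i)) ⊔
      ⨆ i, (F i).map (LinearMap.single ℂ X i) = ⊤ := by
  rw [eq_top_iff, ← LinearMap.iSup_range_single, iSup_le_iff]
  intro k
  induction k using WellFoundedLT.induction with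
  | _ k ih =>
  rintro _ ⟨y, rfl⟩
  obtain ⟨_, ⟨x, rfl⟩, f, hf, rfl⟩ := Submodule.mem_sup.1 (hF k ▸ Submodule.mem_top (x := y))
  have hT : Pi.single k (D k x) = triUpper D A (Pi.single k x) -
      ∑ i ∈ Finset.univ.filter (· < k), Pi.single i (A i k x) := by
    rw [triUpper_single, add_sub_cancel_right]
  rw [LinearMap.single_apply, Pi.single_add, ContinuousLinearMap.coe_coe, hT]
  refine add_mem (sub_mem ?_ (sum_mem fun i hi => ?_)) ?_
  · exact Submodule.mem_sup_left ⟨_, rfl⟩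
  · exact ih i (Finset.mem_filter.1 hi).2 ⟨_, rfl⟩
  · exact Submodule.mem_sup_right
      (Submodule.mem_iSup_of_mem k (Submodule.mem_map_of_mem hf))

theorem cofg_range_triUpper (hD : ∀ i, (LinearMap.range (D i : X i →ₗ[ℂ] X i)).CoFG) :
    (LinearMap.range (triUpper D A : (∀ i, X i) →ₗ[ℂ] (∀ i, X i))).CoFG := by
  choose F hF using fun i => Submodule.exists_isCompl (LinearMap.range (D i : X i →ₗ[ℂ] X i))
  refine Submodule.FG.cofg_of_codisjoint (codisjoint_iff.2 ?_)
    (Submodule.fg_iSup _ fun i => ((hD i).fg_of_isCompl (hF i)).map (LinearMap.single ℂ X i))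
  rw [sup_comm]
  exact range_triUpper_sup_eq_top D A fun i => (hF i).sup_eq_top

end TriUpper

theorem stmt2 {n : ℕ} (hn : 2 ≤ n) {X : Fin n → Type*}
    [∀ i, NormedAddCommGroup (X i)] [∀ i, NormedSpace ℂ (X i)]
    (D : ∀ i, X i →L[ℂ] X i) (A : ∀ i j, X j →L[ℂ] X i) :
    sigmaRe (D ⟨n - 1, by omega⟩) ⊆ sigmaRe (triUpper D A) ∧
      sigmaRe (triUpper D A) ⊆ ⋃ k : Fin n, sigmaRe (D k) := by
  set last : Fin n := ⟨n - 1, by omega⟩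
  have hlast : ∀ j, j ≤ last := fun j => Fin.le_def.2 (by simp only [last]; omega)
  refine ⟨fun lam => not_imp_not.1 fun hT => ?_, fun lam => not_imp_not.1 fun hD => ?_⟩
  · rw [notMem_sigmaRe_iff, triUpper_sub_smul] at hT
    rw [notMem_sigmaRe_iff]
    refine hT.of_map_le (LinearMap.proj_surjective last) ?_
    rintro _ ⟨_, ⟨x, rfl⟩, rfl⟩
    exact ⟨x last, (triUpper_apply_of_forall_le (fun i => D i - lam • 1) A hlast x).symm⟩
  · simp only [Set.mem_iUnion, not_exists, notMem_sigmaRe_iff] at hD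
    rw [notMem_sigmaRe_iff, triUpper_sub_smul]
    exact cofg_range_triUpper _ A hD

end OperatorMatrix
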